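/- Let a, b, λ ∈ ℝ with a ≠ 0 and b ≠ 0. For x ∈ ℝ and y > 0, set r (x, y) = x^2 + y^(2*a/b) (real power) and define gA (x, y) = (r (x, y))^(λ/(2*a)) and gB (x, y) = x * (r (x, y))^(λ/(2*a) − 1/2). Then both gA and gB satisfy the Koopman eigenfunction identity for the same eigenvalue λ: for all t ∈ ℝ, x ∈ ℝ, y > 0, gA (Real.exp (a*t) * x, Real.exp (b*t) * y) = Real.exp (λ*t) * gA (x, y) and gB (Real.exp (a*t) * x, Real.exp (b*t) * y) = Real.exp (λ*t) * gB (x, y); moreover gA and gB are not proportional: there is no constant c ∈ ℝ such that gB (x, y) = c * gA (x, y) for all x ∈ ℝ and y > 0. Hence the eigenvalue λ of the Koopman operator of the flow S_t(x,y) = (e^{at} x, e^{bt} y) has geometric multiplicity greater than one. (Appendix C of the paper: the choices g₀ ≡ 1 and g₀(u,v) = u give genuinely different eigenfunctions for the same eigenvalue, the obstruction to spectral matching.) -/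

import Mathlib

/-!
Under the diagonal flow, `x` is a Koopman eigenfunction with eigenvalue `a` and `y` one with
eigenvalue `b`; products, sums (for equal eigenvalues) and real powers of nonnegative
eigenfunctions are again eigenfunctions, with eigenvalues adding resp. scaling. Hence
`r = x² + y^(2a/b)` has eigenvalue `2a`, and both `gA = r^(λ/2a)` and
`gB = x · r^(λ/2a - 1/2)` have eigenvalue `λ`. They are not proportional because `gB` vanishes
on the axis `x = 0`, where `gA` does not.
-/

open Real

noncomputable section

def IsKoopmanEigenfunction {α : Type*} (S : ℝ → α → α) (D : Set α) (lam : ℝ) (g : α → ℝ) :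
    Prop :=
  ∀ t, ∀ p ∈ D, g (S t p) = exp (lam * t) * g p

namespace IsKoopmanEigenfunction

variable {α : Type*} {S : ℝ → α → α} {D : Set α} {lam mu : ℝ} {g h : α → ℝ}

theorem add (hg : IsKoopmanEigenfunction S D lam g) (hh : IsKoopmanEigenfunction S D lam h) :
    IsKoopmanEigenfunction S D lam (fun p => g p + h p) := by
  intro t p hp
  simp only [hg t p hp, hh t p hp, mul_add]

theorem mul (hg : IsKoopmanEigenfunction S D lam g) (hh : IsKoopmanEigenfunction S D mu h) :
    IsKoopmanEigenfunction S D (lam + mu) (fun p => g p * h p) := by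
  intro t p hp
  simp only [hg t p hp, hh t p hp, add_mul, exp_add]
  ring

theorem pow (hg : IsKoopmanEigenfunction S D lam g) (n : ℕ) :
    IsKoopmanEigenfunction S D (n * lam) (fun p => g p ^ n) := by
  intro t p hp
  dsimp only
  rw [hg t p hp, mul_pow, ← exp_nat_mul, mul_assoc]

theorem rpow (hg : IsKoopmanEigenfunction S D lam g) (hg_nonneg : ∀ p ∈ D, 0 ≤ g p) (s : ℝ) :
    IsKoopmanEigenfunction S D (lam * s) (fun p => g p ^ s) := by
  intro t p hp
  dsimp only
  rw [hg t p hp, mul_rpow (exp_pos _).le (hg_nonneg p hp), ← exp_mul, mul_right_comm]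

end IsKoopmanEigenfunction

def diagonalFlow (a b t : ℝ) (p : ℝ × ℝ) : ℝ × ℝ :=
  (exp (a * t) * p.1, exp (b * t) * p.2)

def upperHalfPlane : Set (ℝ × ℝ) :=
  {p | 0 < p.2}

@[simp]
theorem mem_upperHalfPlane {p : ℝ × ℝ} : p ∈ upperHalfPlane ↔ 0 < p.2 :=
  Iff.rfl

theorem isKoopmanEigenfunction_fst (a b : ℝ) (D : Set (ℝ × ℝ)) :
    IsKoopmanEigenfunction (diagonalFlow a b) D a Prod.fst :=
  fun _ _ _ => rfl

theorem isKoopmanEigenfunction_snd (a b : ℝ) (D : Set (ℝ × ℝ)) :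
    IsKoopmanEigenfunction (diagonalFlow a b) D b Prod.snd :=
  fun _ _ _ => rfl

theorem isKoopmanEigenfunction_radius {a b : ℝ} (hb : b ≠ 0) :
    IsKoopmanEigenfunction (diagonalFlow a b) upperHalfPlane (2 * a)
      (fun p => p.1 ^ 2 + p.2 ^ (2 * a / b)) := by
  have hx : IsKoopmanEigenfunction (diagonalFlow a b) upperHalfPlane (2 * a)
      (fun p => p.1 ^ 2) := by
    convert (isKoopmanEigenfunction_fst a b upperHalfPlane).pow 2 using 1
    norm_num
  have hy : IsKoopmanEigenfunction (diagonalFlow a b) upperHalfPlane (2 * a)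
      (fun p => p.2 ^ (2 * a / b)) := by
    convert (isKoopmanEigenfunction_snd a b upperHalfPlane).rpow (fun _ hp => le_of_lt hp) (2 * a / b) using 1
    field_simp
  exact hx.add hy

theorem radius_nonneg (a b : ℝ) : ∀ p ∈ upperHalfPlane, 0 ≤ p.1 ^ 2 + p.2 ^ (2 * a / b) :=
  fun _ hp => add_nonneg (sq_nonneg _) (rpow_nonneg (le_of_lt hp) _)

theorem not_exists_forall_eq_const_mul {α : Type*} {D : Set α} {g h : α → ℝ} {p q : α}
    (hp : p ∈ D) (hq : q ∈ D) (hgp : g p = 0) (hhp : h p ≠ 0) (hgq : g q ≠ 0) :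
    ¬ ∃ c : ℝ, ∀ x ∈ D, g x = c * h x := by
  rintro ⟨c, hc⟩
  have hc0 : c = 0 := by simpa [hgp, hhp] using (hc p hp).symm
  exact hgq (by simpa [hc0] using hc q hq)

end

/-- Appendix C of the paper: the two choices of initial data g₀ ≡ 1 and g₀(u,v) = u give
Koopman eigenfunctions gA and gB of the flow S_t(x,y) = (e^{at} x, e^{bt} y) with the same
eigenvalue λ that are not proportional; hence λ has geometric multiplicity greater than
one. -/
theorem diagonal_linear_nontrivial_geometric_multiplicity
    (a b lam : ℝ) (ha : a ≠ 0) (hb : b ≠ 0)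
    (r gA gB : ℝ → ℝ → ℝ)
    (hr : ∀ x y : ℝ, r x y = x^2 + y^(2*a/b))
    (hgA : ∀ x y : ℝ, gA x y = (r x y)^(lam/(2*a)))
    (hgB : ∀ x y : ℝ, gB x y = x * (r x y)^(lam/(2*a) - (1:ℝ)/2)) :
    (∀ (t x y : ℝ), 0 < y →
      gA (Real.exp (a*t) * x) (Real.exp (b*t) * y) = Real.exp (lam*t) * gA x y) ∧
    (∀ (t x y : ℝ), 0 < y →
      gB (Real.exp (a*t) * x) (Real.exp (b*t) * y) = Real.exp (lam*t) * gB x y) ∧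
    ¬ ∃ c : ℝ, ∀ (x y : ℝ), 0 < y → gB x y = c * gA x y := by
  have hrad := isKoopmanEigenfunction_radius (a := a) hb
  have hA : IsKoopmanEigenfunction (diagonalFlow a b) upperHalfPlane lam
      (fun p => (p.1 ^ 2 + p.2 ^ (2 * a / b)) ^ (lam / (2 * a))) := by
    convert hrad.rpow (radius_nonneg a b) (lam / (2 * a)) using 1
    field_simp
  have hB : IsKoopmanEigenfunction (diagonalFlow a b) upperHalfPlane lam
      (fun p => p.1 * (p.1 ^ 2 + p.2 ^ (2 * a / b)) ^ (lam / (2 * a) - 1 / 2)) := by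
    convert (isKoopmanEigenfunction_fst a b _).mul
      (hrad.rpow (radius_nonneg a b) (lam / (2 * a) - 1 / 2)) using 1
    field_simp
    ring
  refine ⟨fun t x y hy => ?_, fun t x y hy => ?_, ?_⟩
  · rw [hgA, hgA, hr, hr]
    exact hA t (x, y) hy
  · rw [hgB, hgB, hr, hr]
    exact hB t (x, y) hy
  · rintro ⟨c, hc⟩
    refine not_exists_forall_eq_const_mul (g := Function.uncurry gB) (h := Function.uncurry gA)
      (p := (0, 1)) (q := (1, 1)) (mem_upperHalfPlane.2 one_pos) (mem_upperHalfPlane.2 one_pos)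
      ?_ ?_ ?_ ⟨c, fun p hp => hc p.1 p.2 hp⟩
    · simp [hgB]
    · simp [hgA, hr]
    · rw [Function.uncurry_apply_pair, hgB, hr]
      positivity
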